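/- arXiv:math/0205285 — 3 statements merged into one kernel-verified Lean document; each statement's English description precedes it below -/
import Mathlib

section
/- Let A be a finite-dimensional Hopf algebra over ℂ and let φ be a left integral on A. Then there exists an algebra automorphism σ of A such that φ(a·a') = φ(a'·σ(a)) for all a, a' ∈ A. -/
/-!
STATEMENT 7: Let A be a finite-dimensional Hopf algebra over ℂ and let φ be a left
integral on A.  Then there exists an algebra automorphism σ of A such that
φ(a·a') = φ(a'·σ(a)) for all a, a' ∈ A.
-/

open scoped TensorProduct

/-- A left integral on a Hopf algebra `A` over `ℂ`: a nonzero linear functional `φ` with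
`(id ⊗ φ)(Δ(a)) = φ(a)·1` for all `a`. -/
def IsLeftIntegral {A : Type*} [Ring A] [HopfAlgebra ℂ A] (φ : A →ₗ[ℂ] ℂ) : Prop :=
  φ ≠ 0 ∧ ∀ a : A, TensorProduct.rid ℂ A (φ.lTensor A (Coalgebra.comul (R := ℂ) a)) = φ a • 1

namespace ModularAux

open Coalgebra HopfAlgebra

variable {A : Type*} [Ring A] [HopfAlgebra ℂ A]

/-- The integral property in Sweedler notation: `∑ φ(a₂) • a₁ = φ(a) • 1`. -/
lemma int_repr (φ : A →ₗ[ℂ] ℂ)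
    (hφ : ∀ a : A, TensorProduct.rid ℂ A (φ.lTensor A (Coalgebra.comul (R := ℂ) a)) = φ a • 1)
    {ι : Type*} {a : A} (r : Coalgebra.Repr ℂ a ι) :
    ∑ i ∈ r.index, φ (r.right i) • r.left i = φ a • 1 := by
  have h := hφ a
  rw [← r.eq] at h
  simpa [map_sum] using h

/-- The integral property applied to a product:
`∑ᵢⱼ φ(x₂ᵢ y₂ⱼ) • (x₁ᵢ y₁ⱼ) = φ(xy) • 1`. -/
lemma int_repr2 (φ : A →ₗ[ℂ] ℂ)
    (hφ : ∀ a : A, TensorProduct.rid ℂ A (φ.lTensor A (Coalgebra.comul (R := ℂ) a)) = φ a • 1)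
    {ι κ : Type*} {x y : A} (rx : Coalgebra.Repr ℂ x ι) (ry : Coalgebra.Repr ℂ y κ) :
    ∑ i ∈ rx.index, ∑ j ∈ ry.index,
      φ (rx.right i * ry.right j) • (rx.left i * ry.left j) = φ (x * y) • 1 := by
  have h1 : Coalgebra.comul (R := ℂ) (x * y)
      = ∑ i ∈ rx.index, ∑ j ∈ ry.index,
          (rx.left i * ry.left j) ⊗ₜ[ℂ] (rx.right i * ry.right j) := by
    rw [Bialgebra.comul_mul, ← rx.eq, ← ry.eq, Finset.sum_mul_sum]
    simp [Algebra.TensorProduct.tmul_mul_tmul]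
  have h2 := hφ (x * y)
  rw [h1] at h2
  simpa [map_sum] using h2

/-- Counit property in Sweedler notation: `∑ ε(b₁) • b₂ = b`. -/
lemma counit_sum {ι : Type*} {b : A} (rb : Coalgebra.Repr ℂ b ι) :
    ∑ j ∈ rb.index, Coalgebra.counit (R := ℂ) (rb.left j) • rb.right j = b := by
  have h := Coalgebra.sum_counit_tmul_eq (R := ℂ) rb
  apply_fun (TensorProduct.lid ℂ A) at h
  rw [map_sum] at h
  simp only [TensorProduct.lid_tmul, one_smul] at h
  exact h

/-- The key identity `∑ φ(b₂ a) • S(b₁) = ∑ φ(b a₂) • a₁` for a left integral `φ`. -/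
lemma star2 (φ : A →ₗ[ℂ] ℂ)
    (hφ : ∀ a : A, TensorProduct.rid ℂ A (φ.lTensor A (Coalgebra.comul (R := ℂ) a)) = φ a • 1)
    {ιa ιb : Type*} {a b : A} (ra : Coalgebra.Repr ℂ a ιa) (rb : Coalgebra.Repr ℂ b ιb) :
    ∑ j ∈ rb.index, φ (rb.right j * a) • HopfAlgebra.antipode (R := ℂ) (rb.left j)
      = ∑ i ∈ ra.index, φ (b * ra.right i) • ra.left i := by
  classical
  set S : A →ₗ[ℂ] A := HopfAlgebra.antipode (R := ℂ) with hS
  let b₁ : ∀ j : ιb, Coalgebra.Repr ℂ (rb.left j) (A × A) := fun j => Coalgebra.Repr.arbitrary ℂ _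
  let b₂ : ∀ j : ιb, Coalgebra.Repr ℂ (rb.right j) (A × A) := fun j => Coalgebra.Repr.arbitrary ℂ _
  -- Step 1 : expand `φ(b₂ a) • 1` using the integral property
  have step1 : ∑ j ∈ rb.index, φ (rb.right j * a) • S (rb.left j)
      = ∑ j ∈ rb.index, ∑ k ∈ (b₂ j).index, ∑ i ∈ ra.index,
          φ ((b₂ j).right k * ra.right i)
            • (S (rb.left j) * (b₂ j).left k * ra.left i) := by
    refine Finset.sum_congr rfl fun j _ => ?_
    have h1 : φ (rb.right j * a) • (1 : A)
        = ∑ k ∈ (b₂ j).index, ∑ i ∈ ra.index,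
            φ ((b₂ j).right k * ra.right i) • ((b₂ j).left k * ra.left i) :=
      (int_repr2 φ hφ (b₂ j) ra).symm
    calc φ (rb.right j * a) • S (rb.left j)
        = S (rb.left j) * (φ (rb.right j * a) • (1 : A)) := by
          rw [mul_smul_comm, mul_one]
      _ = ∑ k ∈ (b₂ j).index, ∑ i ∈ ra.index,
            φ ((b₂ j).right k * ra.right i)
              • (S (rb.left j) * (b₂ j).left k * ra.left i) := by
          rw [h1, Finset.mul_sum]
          refine Finset.sum_congr rfl fun k _ => ?_
          rw [Finset.mul_sum]
          refine Finset.sum_congr rfl fun i _ => ?_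
          rw [mul_smul_comm, ← mul_assoc]
  -- the auxiliary linear maps used to transport coassociativity
  let F : ιa → (A ⊗[ℂ] (A ⊗[ℂ] A)) →ₗ[ℂ] A := fun i =>
    LinearMap.mulRight ℂ (ra.left i) ∘ₗ LinearMap.mul' ℂ A ∘ₗ
      TensorProduct.map S ((TensorProduct.rid ℂ A).toLinearMap ∘ₗ
        LinearMap.lTensor A (φ ∘ₗ LinearMap.mulRight ℂ (ra.right i)))
  have hF : ∀ (i : ιa) (x y z : A), F i (x ⊗ₜ[ℂ] (y ⊗ₜ[ℂ] z))
      = φ (z * ra.right i) • (S x * y * ra.left i) := by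
    intro i x y z
    simp [F, LinearMap.mul'_apply, mul_smul_comm, smul_mul_assoc]
  -- Step 2 : coassociativity
  have hco := Coalgebra.sum_tmul_tmul_eq (R := ℂ) rb b₁ b₂
  have step2 : ∀ i : ιa,
      ∑ j ∈ rb.index, ∑ k ∈ (b₂ j).index,
        φ ((b₂ j).right k * ra.right i)
          • (S (rb.left j) * (b₂ j).left k * ra.left i)
      = ∑ j ∈ rb.index, ∑ k ∈ (b₁ j).index,
        φ (rb.right j * ra.right i)
          • (S ((b₁ j).left k) * (b₁ j).right k * ra.left i) := by
    intro i
    have h := congrArg (F i) hco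
    simp only [map_sum, hF] at h
    exact h.symm
  -- Step 3 : antipode axiom
  have step3 : ∀ i : ιa,
      ∑ j ∈ rb.index, ∑ k ∈ (b₁ j).index,
        φ (rb.right j * ra.right i)
          • (S ((b₁ j).left k) * (b₁ j).right k * ra.left i)
      = ∑ j ∈ rb.index,
          (φ (rb.right j * ra.right i) * Coalgebra.counit (R := ℂ) (rb.left j))
            • ra.left i := by
    intro i
    refine Finset.sum_congr rfl fun j _ => ?_
    have hs : ∑ k ∈ (b₁ j).index, S ((b₁ j).left k) * (b₁ j).right k
        = Coalgebra.counit (R := ℂ) (rb.left j) • (1 : A) :=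
      HopfAlgebra.sum_antipode_mul_eq_smul (b₁ j)
    calc ∑ k ∈ (b₁ j).index,
          φ (rb.right j * ra.right i)
            • (S ((b₁ j).left k) * (b₁ j).right k * ra.left i)
        = φ (rb.right j * ra.right i)
            • ((∑ k ∈ (b₁ j).index, S ((b₁ j).left k) * (b₁ j).right k) * ra.left i) := by
          rw [Finset.sum_mul, Finset.smul_sum]
      _ = (φ (rb.right j * ra.right i) * Coalgebra.counit (R := ℂ) (rb.left j))
            • ra.left i := by
          rw [hs, smul_mul_assoc, one_mul, smul_smul]
  -- Step 4 : counit axiom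
  have step4 : ∀ i : ιa,
      ∑ j ∈ rb.index,
        (φ (rb.right j * ra.right i) * Coalgebra.counit (R := ℂ) (rb.left j)) • ra.left i
      = φ (b * ra.right i) • ra.left i := by
    intro i
    rw [← Finset.sum_smul]
    congr 1
    have hb := counit_sum rb
    calc ∑ j ∈ rb.index,
          φ (rb.right j * ra.right i) * Coalgebra.counit (R := ℂ) (rb.left j)
        = ∑ j ∈ rb.index,
            φ ((Coalgebra.counit (R := ℂ) (rb.left j) • rb.right j) * ra.right i) := by
          refine Finset.sum_congr rfl fun j _ => ?_
          rw [smul_mul_assoc, map_smul, smul_eq_mul, mul_comm]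
      _ = φ ((∑ j ∈ rb.index, Coalgebra.counit (R := ℂ) (rb.left j) • rb.right j)
              * ra.right i) := by
          rw [Finset.sum_mul, map_sum]
      _ = φ (b * ra.right i) := by rw [hb]
  -- assemble
  rw [step1]
  calc ∑ j ∈ rb.index, ∑ k ∈ (b₂ j).index, ∑ i ∈ ra.index,
        φ ((b₂ j).right k * ra.right i) • (S (rb.left j) * (b₂ j).left k * ra.left i)
      = ∑ j ∈ rb.index, ∑ i ∈ ra.index, ∑ k ∈ (b₂ j).index,
        φ ((b₂ j).right k * ra.right i) • (S (rb.left j) * (b₂ j).left k * ra.left i) :=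
        Finset.sum_congr rfl fun j _ => Finset.sum_comm
    _ = ∑ i ∈ ra.index, ∑ j ∈ rb.index, ∑ k ∈ (b₂ j).index,
        φ ((b₂ j).right k * ra.right i) • (S (rb.left j) * (b₂ j).left k * ra.left i) :=
        Finset.sum_comm
    _ = ∑ i ∈ ra.index, φ (b * ra.right i) • ra.left i := by
        refine Finset.sum_congr rfl fun i _ => ?_
        rw [step2 i, step3 i, step4 i]

end ModularAux
open ModularAux Coalgebra HopfAlgebra
theorem exists_modular_automorphism
    {A : Type*} [Ring A] [HopfAlgebra ℂ A] [FiniteDimensional ℂ A]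
    (φ : A →ₗ[ℂ] ℂ) (hφ : IsLeftIntegral φ) :
    ∃ σ : A ≃ₐ[ℂ] A, ∀ a a' : A, φ (a * a') = φ (a' * σ a) := by
  classical
  obtain ⟨hφ0, hφ1⟩ := hφ
  set S : A →ₗ[ℂ] A := HopfAlgebra.antipode (R := ℂ) with hSdef
  -- the right kernel of the bilinear form (x, y) ↦ φ (x * y)
  set K : Submodule ℂ A := ⨅ b : A, LinearMap.ker (φ ∘ₗ LinearMap.mulLeft ℂ b) with hKdef
  have memK : ∀ x : A, x ∈ K ↔ ∀ b : A, φ (b * x) = 0 := by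
    intro x
    simp [hKdef, Submodule.mem_iInf, LinearMap.mem_ker]
  have K_ideal : ∀ (c : A) {x : A}, x ∈ K → c * x ∈ K := by
    intro c x hx
    rw [memK] at hx ⊢
    intro b
    rw [← mul_assoc]
    exact hx _
  have one_notK : (1 : A) ∉ K := by
    intro h
    apply hφ0
    ext b
    simpa using (memK 1).1 h b
  -- a basis of A
  set n := Module.finrank ℂ A with hn
  set e : Module.Basis (Fin n) ℂ A := Module.finBasis ℂ A with he
  -- coordinate extraction on the second tensor factor
  set c : Fin n → (A ⊗[ℂ] A →ₗ[ℂ] A) := fun i =>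
    (TensorProduct.lid ℂ A).toLinearMap ∘ₗ LinearMap.rTensor A (e.coord i) with hc
  have hc_tmul : ∀ (i : Fin n) (x y : A), c i (x ⊗ₜ[ℂ] y) = e.repr x i • y := by
    intro i x y
    simp [hc, Module.Basis.coord_apply]
  have expand : ∀ u : A ⊗[ℂ] A, ∑ i, e i ⊗ₜ[ℂ] c i u = u := by
    intro u
    induction u using TensorProduct.induction_on with
    | zero => simp
    | tmul x y =>
        calc ∑ i, e i ⊗ₜ[ℂ] c i (x ⊗ₜ[ℂ] y)
            = ∑ i, (e.repr x i • e i) ⊗ₜ[ℂ] y := by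
              refine Finset.sum_congr rfl fun i _ => ?_
              rw [hc_tmul, TensorProduct.tmul_smul, TensorProduct.smul_tmul']
          _ = (∑ i, e.repr x i • e i) ⊗ₜ[ℂ] y := by rw [TensorProduct.sum_tmul]
          _ = x ⊗ₜ[ℂ] y := by rw [Module.Basis.sum_repr]
    | add u v hu hv =>
        simp only [map_add, TensorProduct.tmul_add, Finset.sum_add_distrib, hu, hv]
  -- the canonical representation of `comul x` with basis left legs
  set v : A → Fin n → A := fun x i => c i (Coalgebra.comul (R := ℂ) x) with hv
  let bRepr : ∀ x : A, Coalgebra.Repr ℂ x (Fin n) := fun x =>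
    ⟨Finset.univ, e, v x, expand _⟩
  have bRepr_index : ∀ x : A, (bRepr x).index = Finset.univ := fun _ => rfl
  have bRepr_left : ∀ x : A, (bRepr x).left = e := fun _ => rfl
  have bRepr_right : ∀ x : A, (bRepr x).right = v x := fun _ => rfl
  -- the second legs of `comul x` lie in `K` when `x ∈ K`
  have hv_memK : ∀ {x : A}, x ∈ K → ∀ i, v x i ∈ K := by
    intro x hx i
    rw [memK]
    intro b
    have h := star2 φ hφ1 (bRepr x) (Coalgebra.Repr.arbitrary ℂ b)
    have h0 : ∑ j ∈ (Coalgebra.Repr.arbitrary ℂ b).index,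
        φ ((Coalgebra.Repr.arbitrary ℂ b).right j * x)
          • HopfAlgebra.antipode (R := ℂ) ((Coalgebra.Repr.arbitrary ℂ b).left j) = 0 := by
      refine Finset.sum_eq_zero fun j _ => ?_
      rw [(memK x).1 hx _, zero_smul]
    rw [h0] at h
    have h2 := (Fintype.linearIndependent_iff.mp e.linearIndependent
      (fun i => φ (b * v x i)) ?_) i
    · exact h2
    · exact h.symm
  -- the counit vanishes on `K`
  have counit_K : ∀ {x : A}, x ∈ K → Coalgebra.counit (R := ℂ) x = 0 := by
    intro x hx
    by_contra hne
    have h1 : Coalgebra.counit (R := ℂ) x • (1 : A) ∈ K := by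
      rw [← HopfAlgebra.sum_antipode_mul_eq_smul (bRepr x)]
      exact Submodule.sum_mem _ fun i _ => K_ideal _ (hv_memK hx i)
    have h2 : (1 : A) ∈ K := by
      have := K.smul_mem (Coalgebra.counit (R := ℂ) x)⁻¹ h1
      rwa [inv_smul_smul₀ hne] at this
    exact one_notK h2
  -- `K = 0`
  have K_bot : ∀ {x : A}, x ∈ K → x = 0 := by
    intro x hx
    have h := Coalgebra.sum_tmul_counit_eq (R := ℂ) (bRepr x)
    apply_fun (TensorProduct.rid ℂ A) at h
    rw [map_sum] at h
    simp only [TensorProduct.rid_tmul, one_smul] at h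
    rw [← h]
    refine Finset.sum_eq_zero fun i _ => ?_
    rw [counit_K (hv_memK hx i), zero_smul]
  -- the two Frobenius maps
  set Θ : A →ₗ[ℂ] Module.Dual ℂ A :=
    { toFun := fun x => φ ∘ₗ LinearMap.mulRight ℂ x
      map_add' := by intro x y; ext b; simp [mul_add]
      map_smul' := by intro r x; ext b; simp [mul_smul_comm] } with hΘ
  set Θ' : A →ₗ[ℂ] Module.Dual ℂ A :=
    { toFun := fun x => φ ∘ₗ LinearMap.mulLeft ℂ x
      map_add' := by intro x y; ext b; simp [add_mul]
      map_smul' := by intro r x; ext b; simp [smul_mul_assoc] } with hΘ'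
  have Θ_apply : ∀ x b : A, Θ x b = φ (b * x) := fun x b => rfl
  have Θ'_apply : ∀ x b : A, Θ' x b = φ (x * b) := fun x b => rfl
  have Θinj : Function.Injective Θ := by
    rw [← LinearMap.ker_eq_bot, LinearMap.ker_eq_bot']
    intro x hx
    apply K_bot
    rw [memK]
    intro b
    have := DFunLike.congr_fun hx b
    simpa [Θ_apply] using this
  have hfr : Module.finrank ℂ A = Module.finrank ℂ (Module.Dual ℂ A) :=
    (Subspace.dual_finrank_eq).symm
  have Θsurj : Function.Surjective Θ :=
    (LinearMap.injective_iff_surjective_of_finrank_eq_finrank hfr).mp Θinj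
  have Θ'inj : Function.Injective Θ' := by
    rw [← LinearMap.ker_eq_bot, LinearMap.ker_eq_bot']
    intro x hx
    have hall : ∀ f : Module.Dual ℂ A, f x = 0 := by
      intro f
      obtain ⟨d, rfl⟩ := Θsurj f
      have := DFunLike.congr_fun hx d
      simpa [Θ_apply, Θ'_apply] using this
    exact (Module.forall_dual_apply_eq_zero_iff ℂ x).mp hall
  have Θ'surj : Function.Surjective Θ' :=
    (LinearMap.injective_iff_surjective_of_finrank_eq_finrank hfr).mp Θ'inj
  let ΘE : A ≃ₗ[ℂ] Module.Dual ℂ A := LinearEquiv.ofBijective Θ ⟨Θinj, Θsurj⟩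
  let Θ'E : A ≃ₗ[ℂ] Module.Dual ℂ A := LinearEquiv.ofBijective Θ' ⟨Θ'inj, Θ'surj⟩
  let ν : A ≃ₗ[ℂ] A := Θ'E.trans ΘE.symm
  have hν : ∀ x : A, Θ (ν x) = Θ' x := by
    intro x
    show Θ (ΘE.symm (Θ'E x)) = Θ' x
    have h := ΘE.apply_symm_apply (Θ'E x)
    exact h
  have key : ∀ x b : A, φ (b * ν x) = φ (x * b) := by
    intro x b
    have := DFunLike.congr_fun (hν x) b
    simpa [Θ_apply, Θ'_apply] using this
  have hone : ν 1 = 1 := by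
    apply Θinj
    ext b
    rw [Θ_apply, key, one_mul, Θ_apply, mul_one]
  have hmul : ∀ x y : A, ν (x * y) = ν x * ν y := by
    intro x y
    apply Θinj
    ext b
    rw [Θ_apply, key, Θ_apply]
    calc φ (x * y * b) = φ (x * (y * b)) := by rw [mul_assoc]
      _ = φ ((y * b) * ν x) := (key x (y * b)).symm
      _ = φ (y * (b * ν x)) := by rw [mul_assoc]
      _ = φ ((b * ν x) * ν y) := (key y (b * ν x)).symm
      _ = φ (b * (ν x * ν y)) := by rw [mul_assoc]
  refine ⟨AlgEquiv.ofLinearEquiv ν hone hmul, fun a a' => ?_⟩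
  have h := key a a'
  simpa using h.symm
end

section
/- Let A be a finite-dimensional Hopf algebra over ℂ and let φ be a left integral on A. Then the Fourier transform F : A → A*, defined by F(a) = φ(·a) (i.e. F(a)(x) = φ(x·a) for x ∈ A), is a linear isomorphism from A onto the full linear dual A*. -/
/-!
STATEMENT 9: Let A be a finite-dimensional Hopf algebra over ℂ and let φ be a left
integral on A.  Then the Fourier transform F : A → A*, F(a)(x) = φ(x·a), is a linear
isomorphism from A onto the full linear dual A*.
-/

open scoped TensorProduct

open Coalgebra TensorProduct LinearMap HopfAlgebra


open Coalgebra TensorProduct LinearMap HopfAlgebra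

suppress_compilation

section Aux
variable {A : Type*} [Ring A] [HopfAlgebra ℂ A]

def NN (φ : A →ₗ[ℂ] ℂ) (a : A) : A →ₗ[ℂ] A :=
  (TensorProduct.rid ℂ A).toLinearMap ∘ₗ φ.lTensor A ∘ₗ
    (LinearMap.mulRight ℂ (Coalgebra.comul (R := ℂ) a)) ∘ₗ TensorProduct.mk ℂ A A 1

lemma NN_apply (φ : A →ₗ[ℂ] ℂ) (a x : A) :
    NN φ a x = TensorProduct.rid ℂ A (φ.lTensor A ((1 ⊗ₜ[ℂ] x) * Coalgebra.comul (R := ℂ) a)) :=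
  rfl

lemma micro (φ : A →ₗ[ℂ] ℂ) (u v : A) (t : A ⊗[ℂ] A) :
    TensorProduct.rid ℂ A (φ.lTensor A ((u ⊗ₜ[ℂ] v) * t)) =
      u * TensorProduct.rid ℂ A (φ.lTensor A ((1 ⊗ₜ[ℂ] v) * t)) := by
  induction t using TensorProduct.induction_on with
  | zero => simp
  | tmul p q => simp [Algebra.TensorProduct.tmul_mul_tmul, mul_smul_comm]
  | add s t hs ht => simp [mul_add, hs, ht]

lemma key (φ : A →ₗ[ℂ] ℂ)
    (hint : ∀ b : A, TensorProduct.rid ℂ A (φ.lTensor A (Coalgebra.comul (R := ℂ) b)) = φ b • 1)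
    (a x : A) (rx : Coalgebra.Repr ℂ x (A × A)) :
    NN φ a x = ∑ i ∈ rx.index, φ (rx.right i * a) • antipode (R := ℂ) (rx.left i) := by
  classical
  set r1 : ∀ i : A × A, Coalgebra.Repr ℂ (rx.left i) (A × A) := fun i => ℛ ℂ (rx.left i) with hr1
  set r2 : ∀ i : A × A, Coalgebra.Repr ℂ (rx.right i) (A × A) := fun i => ℛ ℂ (rx.right i) with hr2
  set Θ : A ⊗[ℂ] (A ⊗[ℂ] A) →ₗ[ℂ] A :=
    LinearMap.mul' ℂ A ∘ₗ TensorProduct.map (antipode (R := ℂ))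
      (LinearMap.mul' ℂ A ∘ₗ (NN φ a).lTensor A) with hΘ
  have hΘapp : ∀ u v w : A, Θ (u ⊗ₜ[ℂ] (v ⊗ₜ[ℂ] w)) = antipode (R := ℂ) u * (v * NN φ a w) := by
    intro u v w; simp [hΘ]
  have hx : ∑ i ∈ rx.index, counit (R := ℂ) (rx.left i) • rx.right i = x := by
    have h := congrArg (TensorProduct.lid ℂ A) (Coalgebra.sum_counit_tmul_eq (R := ℂ) rx)
    simp only [map_sum, TensorProduct.lid_tmul, one_smul] at h
    exact h
  have inner : ∀ i, ∑ k ∈ (r2 i).index, (r2 i).left k * NN φ a ((r2 i).right k)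
      = TensorProduct.rid ℂ A (φ.lTensor A
          (Coalgebra.comul (R := ℂ) (rx.right i) * Coalgebra.comul (R := ℂ) a)) := by
    intro i
    rw [← (r2 i).eq, Finset.sum_mul, map_sum, map_sum]
    exact Finset.sum_congr rfl fun k _ => ((micro φ _ _ _).symm : _)
  calc NN φ a x = ∑ i ∈ rx.index, counit (R := ℂ) (rx.left i) • NN φ a (rx.right i) := by
        conv_lhs => rw [← hx]
        simp [map_sum]
    _ = ∑ i ∈ rx.index, (∑ k ∈ (r1 i).index,
          antipode (R := ℂ) ((r1 i).left k) * (r1 i).right k) * NN φ a (rx.right i) := by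
        refine Finset.sum_congr rfl fun i _ => ?_
        rw [sum_antipode_mul_eq_smul (r1 i), smul_mul_assoc, one_mul]
    _ = Θ (∑ i ∈ rx.index, ∑ k ∈ (r1 i).index,
          (r1 i).left k ⊗ₜ[ℂ] ((r1 i).right k ⊗ₜ[ℂ] rx.right i)) := by
        simp only [map_sum, hΘapp, Finset.sum_mul, mul_assoc]
    _ = Θ (∑ i ∈ rx.index, ∑ k ∈ (r2 i).index,
          rx.left i ⊗ₜ[ℂ] ((r2 i).left k ⊗ₜ[ℂ] (r2 i).right k)) := by
        rw [Coalgebra.sum_tmul_tmul_eq rx r1 r2]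
    _ = ∑ i ∈ rx.index, antipode (R := ℂ) (rx.left i) *
          (∑ k ∈ (r2 i).index, (r2 i).left k * NN φ a ((r2 i).right k)) := by
        simp only [map_sum, hΘapp, Finset.mul_sum]
    _ = ∑ i ∈ rx.index, antipode (R := ℂ) (rx.left i) * (φ (rx.right i * a) • 1) := by
        refine Finset.sum_congr rfl fun i _ => ?_
        rw [inner i, ← Bialgebra.comul_mul, hint]
    _ = ∑ i ∈ rx.index, φ (rx.right i * a) • antipode (R := ℂ) (rx.left i) := by
        simp [mul_smul_comm]

end Aux


set_option synthInstance.maxHeartbeats 1000000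

theorem fourier_transform_bijective
    {A : Type*} [Ring A] [HopfAlgebra ℂ A] [FiniteDimensional ℂ A]
    (φ : A →ₗ[ℂ] ℂ) (hφ : IsLeftIntegral φ)
    (F : A →ₗ[ℂ] (A →ₗ[ℂ] ℂ)) (hF : ∀ a x : A, F a x = φ (x * a)) :
    Function.Bijective F := by
  obtain ⟨hφ0, hint⟩ := hφ
  classical
  have hfr : Module.finrank ℂ A = Module.finrank ℂ (A →ₗ[ℂ] ℂ) :=
    (Subspace.dual_finrank_eq (V := A) (K := ℂ)).symm
  suffices hinj : Function.Injective F by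
    exact ⟨hinj, (LinearMap.injective_iff_surjective_of_finrank_eq_finrank hfr).mp hinj⟩
  rw [← LinearMap.ker_eq_bot]
  set I := LinearMap.ker F with hI
  -- I is a left ideal
  have hleft : ∀ (c : A), ∀ b ∈ I, c * b ∈ I := by
    intro c b hb
    rw [LinearMap.mem_ker] at hb ⊢
    ext x
    rw [hF, ← mul_assoc, ← hF, hb]
    simp
  -- comul of an element of I lies in A ⊗ I
  have hcomul : ∀ b ∈ I, ∃ t : A ⊗[ℂ] I,
      (LinearMap.lTensor A I.subtype) t = Coalgebra.comul (R := ℂ) b := by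
    intro b hb
    rw [LinearMap.mem_ker] at hb
    have hN : ∀ x, NN φ b x = 0 := by
      intro x
      rw [key φ hint b x (ℛ ℂ x)]
      refine Finset.sum_eq_zero fun i _ => ?_
      have : φ ((ℛ ℂ x).right i * b) = 0 := by rw [← hF, hb]; simp
      rw [this, zero_smul]
    have hgen : ∀ (t : A ⊗[ℂ] A) (x : A),
        dualTensorHom ℂ A A ((TensorProduct.comm ℂ A (A →ₗ[ℂ] ℂ))
          ((LinearMap.lTensor A F) t)) x
        = TensorProduct.rid ℂ A (φ.lTensor A ((1 ⊗ₜ[ℂ] x) * t)) := by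
      intro t x
      induction t using TensorProduct.induction_on with
      | zero => simp
      | tmul l r => simp [hF, Algebra.TensorProduct.tmul_mul_tmul]
      | add s t hs ht => simp [mul_add, hs, ht]
    have hw' : dualTensorHom ℂ A A ((TensorProduct.comm ℂ A (A →ₗ[ℂ] ℂ))
        ((LinearMap.lTensor A F) (Coalgebra.comul (R := ℂ) b))) = 0 := by
      ext x
      rw [hgen, ← NN_apply, hN]
      simp
    have hw0 : (LinearMap.lTensor A F) (Coalgebra.comul (R := ℂ) b) = 0 := by
      have h2 := dualTensorHomEquivOfBasis_symm_cancel_left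
        (N := A) (Module.Free.chooseBasis ℂ A)
        ((TensorProduct.comm ℂ A (A →ₗ[ℂ] ℂ)) ((LinearMap.lTensor A F) (Coalgebra.comul (R := ℂ) b)))
      rw [hw'] at h2
      simp only [map_zero] at h2
      have := h2.symm
      rwa [LinearEquiv.map_eq_zero_iff] at this
    have hex : Function.Exact (LinearMap.lTensor A I.subtype) (LinearMap.lTensor A F) :=
      Module.Flat.lTensor_exact A (LinearMap.exact_subtype_ker_map F)
    obtain ⟨t, ht⟩ := (hex (Coalgebra.comul (R := ℂ) b)).mp hw0
    exact ⟨t, ht⟩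
  by_cases hc : ∀ b ∈ I, Coalgebra.counit (R := ℂ) b = 0
  · rw [eq_bot_iff]
    intro b hb
    obtain ⟨t, ht⟩ := hcomul b hb
    have h0 : (Coalgebra.counit (R := ℂ) (A := A)).lTensor A (Coalgebra.comul (R := ℂ) b) = 0 := by
      rw [← ht, ← LinearMap.lTensor_comp_apply]
      have : (Coalgebra.counit (R := ℂ) (A := A)) ∘ₗ I.subtype = 0 := by
        ext ⟨v, hv⟩
        exact hc v hv
      rw [this, lTensor_zero]
      simp
    rw [Coalgebra.lTensor_counit_comul] at h0
    have : b = 0 := by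
      have := congrArg (TensorProduct.rid ℂ A) h0
      simpa using this
    simp [this]
  · exfalso
    push_neg at hc
    obtain ⟨b, hb, hεb⟩ := hc
    obtain ⟨t, ht⟩ := hcomul b hb
    have hmem : ∀ s : A ⊗[ℂ] I, LinearMap.mul' ℂ A
        ((antipode (R := ℂ)).rTensor A ((LinearMap.lTensor A I.subtype) s)) ∈ I := by
      intro s
      induction s using TensorProduct.induction_on with
      | zero => simp only [map_zero]; exact I.zero_mem
      | tmul u v =>
          simp only [lTensor_tmul, rTensor_tmul, mul'_apply]
          exact hleft _ _ v.2
      | add s t hs ht => simp only [map_add]; exact I.add_mem hs ht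
    have h1 : Coalgebra.counit (R := ℂ) b • (1 : A) ∈ I := by
      have := hmem t
      rw [ht] at this
      rwa [mul_antipode_rTensor_comul_apply, Algebra.algebraMap_eq_smul_one] at this
    have hone : (1 : A) ∈ I := by
      have := I.smul_mem (Coalgebra.counit (R := ℂ) b)⁻¹ h1
      rwa [smul_smul, inv_mul_cancel₀ hεb, one_smul] at this
    rw [LinearMap.mem_ker] at hone
    apply hφ0
    ext x
    have : φ (x * 1) = F 1 x := (hF 1 x).symm
    rw [mul_one] at this
    rw [this, hone]
end

section
/- Let A be a finite-dimensional Hopf algebra over ℂ whose antipode S satisfies S∘S = id, and let φ be a left integral on A. Then there exists a scalar k ∈ ℂ such that φ(a) = k·tr(π(a)) for all a ∈ A, where π(a) is the operator of left multiplication by a on A and tr is the trace. -/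
/-!
STATEMENT 18: Let A be a finite-dimensional Hopf algebra over ℂ whose antipode S
satisfies S∘S = id, and let φ be a left integral on A.  Then there exists a scalar
k ∈ ℂ such that φ(a) = k·tr(π(a)) for all a ∈ A, where π(a) is left multiplication
by a and tr is the trace.
-/

open scoped TensorProduct

section Aux

open Coalgebra HopfAlgebra LinearMap TensorProduct Module

variable {A : Type*} [Ring A] [HopfAlgebra ℂ A]


private lemma counit_smul_right' {ι : Type*} (a : A) (r : Coalgebra.Repr ℂ a ι) :
    ∑ i ∈ r.index, Coalgebra.counit (R := ℂ) (r.left i) • r.right i = a := by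
  have h := congrArg (TensorProduct.lid ℂ A) (Coalgebra.sum_counit_tmul_eq r)
  simp only [map_sum, TensorProduct.lid_tmul, one_smul] at h
  exact h

private lemma counit_smul_left' {ι : Type*} (a : A) (r : Coalgebra.Repr ℂ a ι) :
    ∑ i ∈ r.index, Coalgebra.counit (R := ℂ) (r.right i) • r.left i = a := by
  have h := congrArg (TensorProduct.rid ℂ A) (Coalgebra.sum_tmul_counit_eq r)
  simp only [map_sum, TensorProduct.rid_tmul, one_smul] at h
  exact h

private lemma repr_smul' (φ : A →ₗ[ℂ] ℂ)
    (hinv : ∀ a : A, TensorProduct.rid ℂ A (φ.lTensor A (Coalgebra.comul (R := ℂ) a)) = φ a • 1)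
    {ι : Type*} (a : A) (r : Coalgebra.Repr ℂ a ι) :
    ∑ i ∈ r.index, φ (r.right i) • r.left i = φ a • (1 : A) := by
  have h := hinv a
  rw [← r.eq] at h
  simpa [map_sum] using h

noncomputable def Coalgebra.Repr.mul' {ι κ : Type*} (y b : A) (ry : Coalgebra.Repr ℂ y ι)
    (rb : Coalgebra.Repr ℂ b κ) : Coalgebra.Repr ℂ (y * b) (ι × κ) where
  index := ry.index ×ˢ rb.index
  left := fun p => ry.left p.1 * rb.left p.2
  right := fun p => ry.right p.1 * rb.right p.2
  eq := by
    rw [Bialgebra.comul_mul, ← ry.eq, ← rb.eq, Finset.sum_mul_sum]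
    simp only [Algebra.TensorProduct.tmul_mul_tmul]
    rw [Finset.sum_product]

private lemma mul_inv' (φ : A →ₗ[ℂ] ℂ)
    (hinv : ∀ a : A, TensorProduct.rid ℂ A (φ.lTensor A (Coalgebra.comul (R := ℂ) a)) = φ a • 1)
    {ι κ : Type*} (y b : A) (ry : Coalgebra.Repr ℂ y ι) (rb : Coalgebra.Repr ℂ b κ) :
    ∑ i ∈ ry.index, ∑ j ∈ rb.index,
      φ (ry.right i * rb.right j) • (ry.left i * rb.left j) = φ (y * b) • (1 : A) := by
  have h := repr_smul' φ hinv (y * b) (Coalgebra.Repr.mul' y b ry rb)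
  rw [← Finset.sum_product
    (f := fun p => φ (ry.right p.1 * rb.right p.2) • (ry.left p.1 * rb.left p.2))]
  exact h

private lemma star_repr' (φ : A →ₗ[ℂ] ℂ)
    (hinv : ∀ a : A, TensorProduct.rid ℂ A (φ.lTensor A (Coalgebra.comul (R := ℂ) a)) = φ a • 1)
    {ι κ : Type*} (a b : A) (ra : Coalgebra.Repr ℂ a ι) (rb : Coalgebra.Repr ℂ b κ) :
    ∑ j ∈ rb.index, φ (a * rb.right j) • rb.left j
      = ∑ i ∈ ra.index, φ (ra.right i * b) • antipode (R := ℂ) (ra.left i) := by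
  classical
  have rl : ∀ i : ι, Coalgebra.Repr ℂ (ra.left i) (A × A) := fun i => Coalgebra.Repr.arbitrary ℂ _
  have rr : ∀ i : ι, Coalgebra.Repr ℂ (ra.right i) (A × A) := fun i => Coalgebra.Repr.arbitrary ℂ _
  have hco := Coalgebra.sum_tmul_tmul_eq (R := ℂ) ra rl rr
  have step2 : ∀ j : κ,
      (∑ i ∈ ra.index, ∑ k ∈ (rl i).index, φ (ra.right i * rb.right j) •
        (antipode (R := ℂ) ((rl i).left k) * ((rl i).right k * rb.left j)))
      = ∑ i ∈ ra.index, ∑ l ∈ (rr i).index, φ ((rr i).right l * rb.right j) •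
        (antipode (R := ℂ) (ra.left i) * ((rr i).left l * rb.left j)) := by
    intro j
    have h := congrArg ((LinearMap.mul' ℂ A) ∘ₗ ((antipode (R := ℂ) (A := A)).rTensor A) ∘ₗ
      (LinearMap.lTensor A ((TensorProduct.rid ℂ A).toLinearMap ∘ₗ
        (TensorProduct.map (LinearMap.mulRight ℂ (rb.left j))
          (φ ∘ₗ LinearMap.mulRight ℂ (rb.right j)))))) hco
    simpa [map_sum, mul_smul_comm] using h
  have step1 : ∑ j ∈ rb.index, φ (a * rb.right j) • rb.left j
      = ∑ j ∈ rb.index, ∑ i ∈ ra.index, ∑ k ∈ (rl i).index,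
          φ (ra.right i * rb.right j) •
            (antipode (R := ℂ) ((rl i).left k) * ((rl i).right k * rb.left j)) := by
    conv_lhs => rw [← counit_smul_right' a ra]
    rw [Finset.sum_congr rfl]
    intro j _
    rw [Finset.sum_mul, map_sum]
    simp only [smul_mul_assoc, map_smul, smul_eq_mul]
    rw [Finset.sum_smul]
    refine Finset.sum_congr rfl fun i _ => ?_
    rw [mul_comm, ← smul_smul]
    rw [show (Coalgebra.counit (R := ℂ) (ra.left i)) • rb.left j
        = (Coalgebra.counit (R := ℂ) (ra.left i) • (1 : A)) * rb.left j by
      rw [smul_mul_assoc, one_mul]]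
    rw [← HopfAlgebra.sum_antipode_mul_eq_smul (rl i), Finset.sum_mul, Finset.smul_sum]
    simp only [mul_assoc]
  rw [step1]
  rw [Finset.sum_congr rfl fun j _ => step2 j]
  rw [Finset.sum_comm]
  refine Finset.sum_congr rfl fun i _ => ?_
  calc ∑ j ∈ rb.index, ∑ l ∈ (rr i).index, φ ((rr i).right l * rb.right j) •
        (antipode (R := ℂ) (ra.left i) * ((rr i).left l * rb.left j))
      = antipode (R := ℂ) (ra.left i) * ∑ j ∈ rb.index, ∑ l ∈ (rr i).index,
          φ ((rr i).right l * rb.right j) • ((rr i).left l * rb.left j) := by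
        simp only [mul_smul_comm, Finset.mul_sum]
    _ = antipode (R := ℂ) (ra.left i) * (φ (ra.right i * b) • 1) := by
        rw [Finset.sum_comm, mul_inv' φ hinv _ b (rr i) rb]
    _ = φ (ra.right i * b) • antipode (R := ℂ) (ra.left i) := by
        rw [mul_smul_comm, mul_one]

private lemma dagger' (φ : A →ₗ[ℂ] ℂ)
    (hinv : ∀ a : A, TensorProduct.rid ℂ A (φ.lTensor A (Coalgebra.comul (R := ℂ) a)) = φ a • 1)
    {b : A} (hb : ∀ x : A, φ (x * b) = 0) (ξ : A →ₗ[ℂ] ℂ) (a : A) {κ : Type*} (rb : Coalgebra.Repr ℂ b κ) :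
    ∑ j ∈ rb.index, ξ (rb.left j) * φ (a * rb.right j) = 0 := by
  have h := congrArg ξ (star_repr' φ hinv a b (Coalgebra.Repr.arbitrary ℂ a) rb)
  simp only [map_sum, map_smul, smul_eq_mul, hb, zero_mul, Finset.sum_const_zero] at h
  simpa [mul_comm] using h

private lemma faithful' [FiniteDimensional ℂ A] (φ : A →ₗ[ℂ] ℂ)
    (hinv : ∀ a : A, TensorProduct.rid ℂ A (φ.lTensor A (Coalgebra.comul (R := ℂ) a)) = φ a • 1)
    (hφ0 : φ ≠ 0) {b : A} (hb : ∀ x : A, φ (x * b) = 0) : b = 0 := by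
  classical
  obtain ⟨a, ha⟩ : ∃ a : A, φ a ≠ 0 := by
    by_contra h
    push_neg at h
    exact hφ0 (LinearMap.ext fun x => by simpa using h x)
  rw [← Module.forall_dual_apply_eq_zero_iff ℂ b]
  intro ξ
  have rb : Coalgebra.Repr ℂ b (A × A) := Coalgebra.Repr.arbitrary ℂ b
  have rl : ∀ j : A × A, Coalgebra.Repr ℂ (rb.left j) (A × A) := fun j => Coalgebra.Repr.arbitrary ℂ _
  have rr : ∀ j : A × A, Coalgebra.Repr ℂ (rb.right j) (A × A) := fun j => Coalgebra.Repr.arbitrary ℂ _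
  have hco := Coalgebra.sum_tmul_tmul_eq (R := ℂ) rb rl rr
  -- the key double sum
  have hE := congrArg ((LinearMap.mul' ℂ ℂ) ∘ₗ (TensorProduct.map ξ
      (φ ∘ₗ (LinearMap.mul' ℂ A) ∘ₗ
        ((LinearMap.mulLeft ℂ a ∘ₗ antipode (R := ℂ) (A := A)).rTensor A)))) hco
  simp only [map_sum, LinearMap.coe_comp, Function.comp_apply, TensorProduct.map_tmul,
    LinearMap.rTensor_tmul, LinearMap.mul'_apply, LinearMap.mulLeft_apply,
    smul_eq_mul] at hE
  -- hE : ∑ j ∑ k, ξ u * φ ((a * S w) * bR j) = ∑ j ∑ l, ξ (bL j) * φ ((a * S p) * q)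
  have claim1 : (∑ j ∈ rb.index, ∑ l ∈ (rr j).index,
      ξ (rb.left j) * φ ((a * antipode (R := ℂ) ((rr j).left l)) * (rr j).right l))
      = ξ b * φ a := by
    have hper : ∀ j : A × A, (∑ l ∈ (rr j).index,
        φ ((a * antipode (R := ℂ) ((rr j).left l)) * (rr j).right l))
        = Coalgebra.counit (R := ℂ) (rb.right j) * φ a := by
      intro j
      simp only [mul_assoc, ← map_sum, one_mul]
      rw [← Finset.mul_sum, HopfAlgebra.sum_antipode_mul_eq_smul (rr j),
        mul_smul_comm, mul_one, map_smul, smul_eq_mul]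
    calc (∑ j ∈ rb.index, ∑ l ∈ (rr j).index,
        ξ (rb.left j) * φ ((a * antipode (R := ℂ) ((rr j).left l)) * (rr j).right l))
        = ∑ j ∈ rb.index, ξ (rb.left j) * (Coalgebra.counit (R := ℂ) (rb.right j) * φ a) := by
          refine Finset.sum_congr rfl fun j _ => ?_
          rw [← Finset.mul_sum, hper j]
      _ = (∑ j ∈ rb.index, Coalgebra.counit (R := ℂ) (rb.right j) * ξ (rb.left j)) * φ a := by
          rw [Finset.sum_mul]; refine Finset.sum_congr rfl fun j _ => by ring
      _ = ξ b * φ a := by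
          have h := congrArg ξ (counit_smul_left' b rb)
          simp only [map_sum, map_smul, smul_eq_mul] at h
          rw [h]
  have claim2 : (∑ j ∈ rb.index, ∑ k ∈ (rl j).index,
      ξ ((rl j).left k) * φ ((a * antipode (R := ℂ) ((rl j).right k)) * rb.right j)) = 0 := by
    set B := Module.finBasis ℂ A with hB
    have hexp : ∀ w y : A, φ ((a * antipode (R := ℂ) w) * y)
        = ∑ m, (B.coord m) (a * antipode (R := ℂ) w) * φ (B m * y) := by
      intro w y
      conv_lhs => rw [← Basis.sum_repr B (a * antipode (R := ℂ) w)]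
      rw [Finset.sum_mul, map_sum]
      exact Finset.sum_congr rfl fun m _ => by
        rw [smul_mul_assoc, map_smul, smul_eq_mul, Basis.coord_apply]
    set χ : Fin (finrank ℂ A) → (A →ₗ[ℂ] ℂ) := fun m =>
      (LinearMap.mul' ℂ ℂ) ∘ₗ (TensorProduct.map ξ
        ((B.coord m) ∘ₗ LinearMap.mulLeft ℂ a ∘ₗ antipode (R := ℂ) (A := A))) ∘ₗ
        (CoalgebraStruct.comul (R := ℂ) (A := A)) with hχdef
    have hχ : ∀ (m : Fin (finrank ℂ A)) (j : A × A), χ m (rb.left j)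
        = ∑ k ∈ (rl j).index, ξ ((rl j).left k) *
            (B.coord m) (a * antipode (R := ℂ) ((rl j).right k)) := by
      intro m j
      rw [hχdef]
      simp only [LinearMap.coe_comp, Function.comp_apply]
      rw [← (rl j).eq]
      simp only [map_sum, TensorProduct.map_tmul, LinearMap.coe_comp, Function.comp_apply,
        LinearMap.mul'_apply, LinearMap.mulLeft_apply, smul_eq_mul]
    calc (∑ j ∈ rb.index, ∑ k ∈ (rl j).index,
        ξ ((rl j).left k) * φ ((a * antipode (R := ℂ) ((rl j).right k)) * rb.right j))
        = ∑ j ∈ rb.index, ∑ m, ∑ k ∈ (rl j).index,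
            (ξ ((rl j).left k) * (B.coord m) (a * antipode (R := ℂ) ((rl j).right k)))
              * φ (B m * rb.right j) := by
          refine Finset.sum_congr rfl fun j _ => ?_
          rw [Finset.sum_comm]
          refine Finset.sum_congr rfl fun k _ => ?_
          rw [hexp, Finset.mul_sum]
          exact Finset.sum_congr rfl fun m _ => by ring
      _ = ∑ m, ∑ j ∈ rb.index, (∑ k ∈ (rl j).index,
            ξ ((rl j).left k) * (B.coord m) (a * antipode (R := ℂ) ((rl j).right k)))
              * φ (B m * rb.right j) := by
          rw [Finset.sum_comm]
          exact Finset.sum_congr rfl fun m _ => Finset.sum_congr rfl fun j _ =>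
            (Finset.sum_mul _ _ _).symm
      _ = ∑ m, ∑ j ∈ rb.index, (χ m) (rb.left j) * φ (B m * rb.right j) := by
          exact Finset.sum_congr rfl fun m _ => Finset.sum_congr rfl fun j _ => by rw [hχ]
      _ = 0 := by
          rw [Finset.sum_eq_zero]
          intro m _
          exact dagger' φ hinv hb (χ m) (B m) rb
  have hzero : ξ b * φ a = 0 := by rw [← claim1, ← hE, claim2]
  rcases mul_eq_zero.mp hzero with h | h
  · exact h
  · exact absurd h ha


end Aux

open Coalgebra HopfAlgebra LinearMap TensorProduct Module in
theorem leftIntegral_eq_scalar_mul_trace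
    {A : Type*} [Ring A] [HopfAlgebra ℂ A] [FiniteDimensional ℂ A]
    (hS : HopfAlgebra.antipode (R := ℂ) (A := A) ∘ₗ HopfAlgebra.antipode (R := ℂ) (A := A)
      = LinearMap.id)
    (φ : A →ₗ[ℂ] ℂ) (hφ : IsLeftIntegral φ) :
    ∃ k : ℂ, ∀ a : A, φ a = k * LinearMap.trace ℂ A (LinearMap.mulLeft ℂ a) := by
  obtain ⟨hφ0, hinv⟩ := hφ

  classical
  -- the map θ : A → A*, b ↦ φ(· * b)
  set θ : A →ₗ[ℂ] Module.Dual ℂ A :=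
    { toFun := fun c => φ ∘ₗ LinearMap.mulRight ℂ c
      map_add' := fun x y => by
        ext z; simp [LinearMap.mulRight_apply, mul_add]
      map_smul' := fun c x => by
        ext z; simp [LinearMap.mulRight_apply, mul_smul_comm] } with hθdef
  have hθapp : ∀ c x : A, θ c x = φ (x * c) := fun c x => rfl
  have hker : ∀ c : A, θ c = 0 → c = 0 := by
    intro c hc
    exact faithful' φ hinv hφ0 fun x => by
      have := congrArg (fun f => f x) hc; simpa [hθapp] using this
  have hinj : Function.Injective θ :=
    LinearMap.ker_eq_bot.mp (LinearMap.ker_eq_bot'.mpr hker)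
  have hsurj : Function.Surjective θ :=
    (LinearMap.injective_iff_surjective_of_finrank_eq_finrank
      (Subspace.dual_finrank_eq (K := ℂ) (V := A)).symm).mp hinj
  obtain ⟨t, ht⟩ := hsurj (Coalgebra.counit (R := ℂ) (A := A))
  have hφt : ∀ x : A, φ (x * t) = Coalgebra.counit (R := ℂ) x := by
    intro x
    have := congrArg (fun f => f x) ht
    simpa [hθapp] using this
  set rt := Coalgebra.Repr.arbitrary ℂ t with hrt
  -- dual bases identity
  have hdual : ∀ x : A,
      ∑ j ∈ rt.index, φ (x * rt.right j) • antipode (R := ℂ) (rt.left j) = x := by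
    intro x
    set rx := Coalgebra.Repr.arbitrary ℂ x with hrx
    have hs := star_repr' φ hinv x t rx rt
    have h2 : ∑ i ∈ rx.index, φ (rx.right i * t) • antipode (R := ℂ) (rx.left i)
        = antipode (R := ℂ) x := by
      rw [Finset.sum_congr rfl fun i _ => by rw [hφt (rx.right i)]]
      have h3 := congrArg (antipode (R := ℂ) (A := A)) (counit_smul_left' x rx)
      simpa only [map_sum, map_smul] using h3
    rw [h2] at hs
    have h4 := congrArg (antipode (R := ℂ) (A := A)) hs
    simp only [map_sum, map_smul] at h4
    rw [h4]
    exact LinearMap.congr_fun hS x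
  -- trace formula
  have hkey : ∀ a : A, LinearMap.trace ℂ A (LinearMap.mulLeft ℂ a)
      = Coalgebra.counit (R := ℂ) t * φ a := by
    intro a
    have hmul : LinearMap.mulLeft ℂ a = ∑ j ∈ rt.index,
        dualTensorHom ℂ A A ((φ ∘ₗ LinearMap.mulRight ℂ (rt.right j)) ⊗ₜ[ℂ]
          (a * antipode (R := ℂ) (rt.left j))) := by
      ext x
      simp only [LinearMap.sum_apply, dualTensorHom_apply, LinearMap.coe_comp,
        Function.comp_apply, LinearMap.mulRight_apply, LinearMap.mulLeft_apply]
      conv_lhs => rw [← hdual x]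
      rw [Finset.mul_sum]
      exact Finset.sum_congr rfl fun j _ => by rw [mul_smul_comm]
    rw [hmul, map_sum]
    simp only [trace_eq_contract_apply, contractLeft_apply, LinearMap.coe_comp,
      Function.comp_apply, LinearMap.mulRight_apply]
    calc ∑ j ∈ rt.index, φ ((a * antipode (R := ℂ) (rt.left j)) * rt.right j)
        = φ (a * ∑ j ∈ rt.index, antipode (R := ℂ) (rt.left j) * rt.right j) := by
          rw [Finset.mul_sum, map_sum]
          exact Finset.sum_congr rfl fun j _ => by rw [mul_assoc]
      _ = Coalgebra.counit (R := ℂ) t * φ a := by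
          rw [HopfAlgebra.sum_antipode_mul_eq_smul rt, mul_smul_comm, mul_one, map_smul,
            smul_eq_mul]
  -- ε(t) ≠ 0
  obtain ⟨a₀, ha₀⟩ : ∃ a : A, φ a ≠ 0 := by
    by_contra h
    push_neg at h
    exact hφ0 (LinearMap.ext fun x => by simpa using h x)
  have : Nontrivial A := ⟨⟨a₀, 0, fun h => ha₀ (by rw [h, map_zero])⟩⟩
  have hfr : (finrank ℂ A : ℂ) ≠ 0 :=
    Nat.cast_ne_zero.mpr finrank_pos.ne'
  have h1 := hkey 1
  rw [LinearMap.mulLeft_one, LinearMap.trace_id] at h1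
  have hε : Coalgebra.counit (R := ℂ) t ≠ 0 := by
    intro h0
    rw [h0, zero_mul] at h1
    exact hfr h1
  refine ⟨(Coalgebra.counit (R := ℂ) t)⁻¹, fun a => ?_⟩
  rw [hkey a, ← mul_assoc, inv_mul_cancel₀ hε, one_mul]
end
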